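/- If D ⊢ +φ p for a literal p with p ∉ F in a consistent defeasible theory D, then D ⊢ −Σ ∼p (there is no reasoning chain supporting the complement of p). -/

import Mathlib

namespace DL

abbrev Atom := ℕ

/-- A literal: an atom with a polarity. -/
structure Lit where
  atom : Atom
  pos : Bool
deriving DecidableEq

/-- The complement `∼p` of a literal. -/
def Lit.neg (l : Lit) : Lit := ⟨l.atom, !l.pos⟩

/-- A defeasible rule: a finite set of antecedent literals and a head literal. -/
structure Rule where
  ante : Finset Lit
  head : Lit
deriving DecidableEq

/-- A defeasible theory: facts, defeasible rules, and a superiority relation. -/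
structure DTheory where
  facts : Finset Lit
  rules : Finset Rule
  sup : Rule → Rule → Prop

/-- A superiority relation is acyclic iff its transitive closure is irreflexive. -/
def Acyclic (sup : Rule → Rule → Prop) : Prop :=
  Irreflexive (Relation.TransGen sup)

def DTheory.FactsConsistent (D : DTheory) : Prop :=
  ∀ l ∈ D.facts, l.neg ∉ D.facts

/-- Well-formedness of a defeasible theory: consistent facts, acyclic superiority
relation defined on the rules of the theory. -/
def DTheory.WellFormed (D : DTheory) : Prop :=
  D.FactsConsistent ∧ Acyclic D.sup ∧ ∀ r s, D.sup r s → r ∈ D.rules ∧ s ∈ D.rules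

/-- Proof tags: Δ, Σ, σ, ω, φ, ∂. -/
inductive Tag | delta | Sig | sgm | omg | phi | prt
deriving DecidableEq

/-- A tagged literal: a tag, a sign (`true` = `+`, `false` = `−`), and a literal. -/
abbrev TLit := Tag × Bool × Lit

/-- The proof conditions of Defeasible Logic (defeasible rules only), relative to
the preceding part `P` of a proof sequence. -/
def Cond (D : DTheory) (P : List TLit) : Tag → Bool → Lit → Prop
  | .delta, true, q => q ∈ D.facts
  | .delta, false, q => q ∉ D.facts
  | .Sig, true, q =>
      (Tag.delta, true, q) ∈ P ∨
      ∃ r ∈ D.rules, r.head = q ∧ ∀ a ∈ r.ante, (Tag.Sig, true, a) ∈ P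
  | .Sig, false, q =>
      (Tag.delta, true, q) ∉ P ∧
      ∀ r ∈ D.rules, r.head = q → ∃ a ∈ r.ante, (Tag.Sig, false, a) ∈ P
  | .sgm, true, q =>
      (Tag.delta, true, q) ∈ P ∨
      ∃ r ∈ D.rules, r.head = q ∧ (∀ a ∈ r.ante, (Tag.sgm, true, a) ∈ P) ∧
        ∀ s ∈ D.rules, s.head = q.neg →
          (∃ a ∈ s.ante, (Tag.prt, false, a) ∈ P) ∨ ¬ D.sup s r
  | .sgm, false, q =>
      (Tag.delta, true, q) ∉ P ∧
      ∀ r ∈ D.rules, r.head = q →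
        (∃ a ∈ r.ante, (Tag.sgm, false, a) ∈ P) ∨
        ∃ s ∈ D.rules, s.head = q.neg ∧ (∀ a ∈ s.ante, (Tag.prt, true, a) ∈ P) ∧ D.sup s r
  | .omg, true, q =>
      (Tag.delta, true, q) ∈ P ∨
      ∃ r ∈ D.rules, r.head = q ∧ ∀ a ∈ r.ante, (Tag.prt, true, a) ∈ P
  | .omg, false, q =>
      (Tag.delta, true, q) ∉ P ∧
      ∀ r ∈ D.rules, r.head = q → ∃ a ∈ r.ante, (Tag.prt, false, a) ∈ P
  | .phi, true, q =>
      (Tag.delta, true, q) ∈ P ∨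
      ∃ r ∈ D.rules, r.head = q ∧ (∀ a ∈ r.ante, (Tag.phi, true, a) ∈ P) ∧
        ∀ s ∈ D.rules, s.head = q.neg → ∃ a ∈ s.ante, (Tag.Sig, false, a) ∈ P
  | .phi, false, q =>
      (Tag.delta, true, q) ∉ P ∧
      ∀ r ∈ D.rules, r.head = q →
        (∃ a ∈ r.ante, (Tag.phi, false, a) ∈ P) ∨
        ∃ s ∈ D.rules, s.head = q.neg ∧ ∀ a ∈ s.ante, (Tag.Sig, true, a) ∈ P
  | .prt, true, q =>
      (Tag.delta, true, q) ∈ P ∨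
      ((Tag.delta, false, q.neg) ∈ P ∧
       (∃ r ∈ D.rules, r.head = q ∧ ∀ a ∈ r.ante, (Tag.prt, true, a) ∈ P) ∧
       ∀ s ∈ D.rules, s.head = q.neg →
         (∃ a ∈ s.ante, (Tag.prt, false, a) ∈ P) ∨
         ∃ t ∈ D.rules, t.head = q ∧ (∀ a ∈ t.ante, (Tag.prt, true, a) ∈ P) ∧ D.sup t s)
  | .prt, false, q =>
      (Tag.delta, true, q) ∉ P ∧
      ((Tag.delta, true, q.neg) ∈ P ∨
       (∀ r ∈ D.rules, r.head = q → ∃ a ∈ r.ante, (Tag.prt, false, a) ∈ P) ∨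
       ∃ s ∈ D.rules, s.head = q.neg ∧ (∀ a ∈ s.ante, (Tag.prt, true, a) ∈ P) ∧
         ∀ t ∈ D.rules, t.head = q →
           (∃ a ∈ t.ante, (Tag.prt, false, a) ∈ P) ∨ ¬ D.sup t s)

/-- A proof (derivation) is a finite sequence of tagged literals each of which
satisfies the proof condition relative to the preceding part of the sequence. -/
inductive ValidProof (D : DTheory) : List TLit → Prop
  | nil : ValidProof D []
  | snoc {P : List TLit} {t : Tag} {s : Bool} {q : Lit} :
      ValidProof D P → Cond D P t s q → ValidProof D (P ++ [(t, s, q)])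

/-- `D ⊢ ±# q`: some valid proof in `D` contains the tagged literal. -/
def Proves (D : DTheory) (t : Tag) (s : Bool) (q : Lit) : Prop :=
  ∃ P, ValidProof D P ∧ (t, s, q) ∈ P

/-- A theory is consistent iff it never defeasibly proves both a literal and
its complement. -/
def Consistent (D : DTheory) : Prop :=
  ∀ p : Lit, ¬ (Proves D .prt true p ∧ Proves D .prt true p.neg)

/-- `a` depends on `b` iff `b = a`, or for every rule for `a` either `b` is an
antecedent or some antecedent depends on `b` (least such relation,
impredicatively encoded). -/
def DependsOn (D : DTheory) (a b : Lit) : Prop :=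
  ∀ S : Lit → Lit → Prop,
    (∀ x, S x x) →
    (∀ x y, (∀ r ∈ D.rules, r.head = x → y ∈ r.ante ∨ ∃ c ∈ r.ante, S c y) → S x y) →
    S a b

/-- `p` is ∂-unreachable iff every rule for `p` either has two antecedents
depending on complementary literals or has a ∂-unreachable antecedent
(least such predicate, impredicatively encoded). -/
def Unreachable (D : DTheory) (p : Lit) : Prop :=
  ∀ S : Lit → Prop,
    (∀ x, (∀ r ∈ D.rules, r.head = x →
        (∃ l : Lit, ∃ a ∈ r.ante, ∃ b ∈ r.ante, DependsOn D a l ∧ DependsOn D b l.neg) ∨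
        ∃ d ∈ r.ante, S d) → S x) →
    S p

/-- The literal `p` appears in the theory `D` (its atom occurs in `D`). -/
def AppearsIn (p : Lit) (D : DTheory) : Prop :=
  (∃ l ∈ D.facts, l.atom = p.atom) ∨
  ∃ r ∈ D.rules, r.head.atom = p.atom ∨ ∃ l ∈ r.ante, l.atom = p.atom

/-- Positive part of the belief set of a defeasible theory. -/
def BSplus (D : DTheory) : Set Lit := {p | AppearsIn p D ∧ Proves D .prt true p}

/-- Negative part of the belief set of a defeasible theory. -/
def BSminus (D : DTheory) : Set Lit := {p | AppearsIn p D ∧ Proves D .prt false p}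

/-- The belief set of a defeasible theory. -/
def BS (D : DTheory) : Set Lit := BSplus D ∪ BSminus D

/-- Edge of the atom dependency graph: from atom `a` to atom `b` whenever some
rule has head with atom `b` and an antecedent literal with atom `a`. -/
def AtomEdge (D : DTheory) (a b : Atom) : Prop :=
  ∃ r ∈ D.rules, r.head.atom = b ∧ ∃ l ∈ r.ante, l.atom = a

/-- A theory is decisive iff every literal appearing in it is defeasibly
provable or defeasibly refuted. -/
def Decisive (D : DTheory) : Prop :=
  ∀ p : Lit, AppearsIn p D → Proves D .prt true p ∨ Proves D .prt false p

end DL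

/-!
Since `p ∉ F`, the `+φ` line for `p` was justified by a rule for `p` such that every rule for
`∼p` has an antecedent already tagged `−Σ`. The `−Σ` lines of a proof form a proof on their
own, and appending `−Σ ∼p` to it is justified by those same antecedents.
-/

namespace DL

def isNegSig : TLit → Bool
  | (.Sig, false, _) => true
  | _ => false

/-- The `−Σ` condition only rules out an earlier `+Δ` line, and a filtered proof has none. -/
theorem cond_negSig_filter {D : DTheory} {P : List TLit} {q : Lit}
    (hblocked : ∀ r ∈ D.rules, r.head = q → ∃ a ∈ r.ante, (Tag.Sig, false, a) ∈ P) :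
    Cond D (P.filter isNegSig) .Sig false q := by
  refine ⟨by simp [isNegSig], fun r hr hhead => ?_⟩
  obtain ⟨a, ha, hmem⟩ := hblocked r hr hhead
  exact ⟨a, ha, List.mem_filter.2 ⟨hmem, rfl⟩⟩

namespace ValidProof

variable {D : DTheory} {P : List TLit}

theorem exists_cond_of_mem (hP : ValidProof D P) {x : TLit} (hx : x ∈ P) :
    ∃ P' ⊆ P, Cond D P' x.1 x.2.1 x.2.2 := by
  induction hP with
  | nil => simp at hx
  | @snoc P t s q _ hc ih =>
    rcases List.mem_append.1 hx with hx | hx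
    · obtain ⟨P', hsub, hc'⟩ := ih hx
      exact ⟨P', List.subset_append_of_subset_left _ hsub, hc'⟩
    · obtain rfl := List.mem_singleton.1 hx
      exact ⟨P, List.subset_append_left _ _, hc⟩

theorem mem_facts_of_delta (hP : ValidProof D P) {q : Lit} (hq : (Tag.delta, true, q) ∈ P) :
    q ∈ D.facts := by
  obtain ⟨_, _, hc⟩ := hP.exists_cond_of_mem hq
  exact hc

theorem filter_isNegSig (hP : ValidProof D P) : ValidProof D (P.filter isNegSig) := by
  induction hP with
  | nil => exact .nil
  | @snoc P t s q _ hc ih =>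
    rw [List.filter_append]
    match t, s, hc with
    | .Sig, false, hc => exact ih.snoc (cond_negSig_filter hc.2)
    | .delta, _, _ | .Sig, true, _ | .sgm, _, _ | .omg, _, _ | .phi, _, _ | .prt, _, _ =>
      simpa [isNegSig] using ih

theorem proves_negSig (hP : ValidProof D P) {q : Lit}
    (hblocked : ∀ r ∈ D.rules, r.head = q → ∃ a ∈ r.ante, (Tag.Sig, false, a) ∈ P) :
    Proves D .Sig false q :=
  ⟨P.filter isNegSig ++ [(.Sig, false, q)], hP.filter_isNegSig.snoc (cond_negSig_filter hblocked),
    List.mem_append_right _ (List.mem_singleton_self _)⟩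

end ValidProof

end DL

open DL in
theorem stmt0_general (D : DTheory)
    (p : Lit) (hp : p ∉ D.facts) (h : Proves D .phi true p) :
    Proves D .Sig false p.neg := by
  obtain ⟨P, hP, hmem⟩ := h
  obtain ⟨P', hsub, hc⟩ := hP.exists_cond_of_mem hmem
  rcases hc with hfact | ⟨_, _, _, _, hblocked⟩
  · exact absurd (hP.mem_facts_of_delta (hsub hfact)) hp
  · exact hP.proves_negSig fun s hs hhead =>
      (hblocked s hs hhead).imp fun _ ⟨ha, hmem⟩ => ⟨ha, hsub hmem⟩

open DL in
/-- If `D ⊢ +φ p` for a literal `p ∉ F` in a consistent defeasible theory `D`,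
then `D ⊢ −Σ ∼p`. -/
theorem stmt0 (D : DTheory) (hwf : D.WellFormed) (hcons : Consistent D)
    (p : Lit) (hp : p ∉ D.facts) (h : Proves D .phi true p) :
    Proves D .Sig false p.neg :=
  stmt0_general D p hp h
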